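/- Assume A = S/𝔞 satisfies: Tor_i^A(k,k)_α has dimension equal to the number of pairs (J, u) with J ⊆ [n], u a monomial of the ring R, |J| + |u| = i and α_J + deg(u) = α (Conjecture P on the minimal resolution). Then the multigraded Poincaré–Betti series of A equals Π_{i=1}^n (1 + x_i t) · Hilb_R(x, 1, t), where Hilb_R is the multigraded Hilbert series of R. -/

import Mathlib

/-!
STATEMENT 7: Suppose the multigraded deviations of `A` satisfy Conjecture (P):
`dim_k Tor_i^A(k,k)_α` equals the number of pairs `(J, u)` with `J ⊆ [n]`, `u` a
monomial of the ring `R`, `|J| + |u| = i` and `α_J + deg u = α`.  Then the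
multigraded Poincaré–Betti series of `A` equals
`Π_{i=1}^n (1 + x_i t) · Hilb_R(x, 1, t)`.

The monomials of `R` are abstracted as a type `U` with a multidegree `mdeg` and
a homological degree `hdeg`; `T i α = dim_k Tor_i^A(k,k)_α` is abstracted as a
function.  Series are encoded in `MvPowerSeries (Fin n ⊕ Unit) ℚ`, the extra
variable being `t`.
-/

noncomputable section

variable {n : ℕ}

/-- encode a pair (multidegree, homological degree) as an exponent vector. -/
def emb (α : Fin n →₀ ℕ) (i : ℕ) : (Fin n ⊕ Unit) →₀ ℕ :=
  Finsupp.mapDomain Sum.inl α + Finsupp.single (Sum.inr ()) i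

/-- the multidegree part of an exponent vector. -/
def dec (e : (Fin n ⊕ Unit) →₀ ℕ) : Fin n →₀ ℕ :=
  Finsupp.comapDomain Sum.inl e Sum.inl_injective.injOn

/-- the `t`-degree part of an exponent vector. -/
def tdeg (e : (Fin n ⊕ Unit) →₀ ℕ) : ℕ := e (Sum.inr ())

/-- the characteristic vector `α_J` of `J ⊆ [n]`. -/
def chi (J : Finset (Fin n)) : Fin n →₀ ℕ := ∑ j ∈ J, Finsupp.single j 1

/-- build a power series from its coefficient function. -/
def fromFun (f : ((Fin n ⊕ Unit) →₀ ℕ) → ℚ) : MvPowerSeries (Fin n ⊕ Unit) ℚ := f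

/-! Under (P) the coefficient of `x^α t^i` in the Poincaré–Betti series counts pairs `(J, u)`
of total degree `(α, i)`, so the series is the generating function of the product of the
subsets of `[n]` (with `J` of weight `x^{α_J} t^{|J|}`) and the monomials of `R`. Generating
functions of a product of graded sets multiply, and that of the subsets of `[n]` is
`Π (1 + x_i t)`. -/

open MvPowerSeries

section CardSeries

variable {σ U R : Type*} [CommSemiring R]

def cardSeries (deg : U → σ →₀ ℕ) : MvPowerSeries σ R :=
  fun e => (Nat.card {u // deg u = e} : R)

theorem coeff_cardSeries (deg : U → σ →₀ ℕ) (e : σ →₀ ℕ) :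
    coeff e (cardSeries (R := R) deg) = Nat.card {u // deg u = e} := rfl

theorem finite_add_fiber {deg : U → σ →₀ ℕ} (hfin : ∀ e, {u | deg u = e}.Finite)
    (d e : σ →₀ ℕ) : Finite {u // d + deg u = e} :=
  ((hfin (e - d)).subset fun u (hu : d + deg u = e) => by simp [← hu]).to_subtype

theorem card_add_fiber (deg : U → σ →₀ ℕ) (d e : σ →₀ ℕ) :
    Nat.card {u // d + deg u = e} = if d ≤ e then Nat.card {u // deg u = e - d} else 0 := by
  split_ifs with hde
  · exact Nat.card_congr <| Equiv.subtypeEquivRight fun u => by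
      rw [eq_tsub_iff_add_eq_of_le hde, add_comm]
  · have : IsEmpty {u // d + deg u = e} := ⟨fun ⟨u, hu⟩ => hde (hu ▸ le_self_add)⟩
    exact Nat.card_of_isEmpty

theorem sum_monomial_mul_cardSeries {ι : Type*} [Fintype ι] (d : ι → σ →₀ ℕ)
    {deg : U → σ →₀ ℕ} (hfin : ∀ e, {u | deg u = e}.Finite) :
    (∑ j, monomial (d j) (1 : R)) * cardSeries deg =
      cardSeries fun p : ι × U => d p.1 + deg p.2 := by
  ext e
  have := finite_add_fiber hfin
  rw [coeff_cardSeries, Nat.card_congr (Equiv.subtypeProdEquivSigmaSubtype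
      fun j u => d j + deg u = e), Nat.card_sigma, Finset.sum_mul, map_sum]
  push_cast
  refine Finset.sum_congr rfl fun j _ => ?_
  rw [coeff_monomial_mul, card_add_fiber, one_mul, coeff_cardSeries]
  split_ifs <;> simp

end CardSeries

theorem prod_one_add_monomial {σ ι R : Type*} [CommSemiring R] (s : Finset ι)
    (d : ι → σ →₀ ℕ) :
    ∏ i ∈ s, (1 + monomial (d i) (1 : R)) = ∑ t ∈ s.powerset, monomial (∑ i ∈ t, d i) 1 := by
  simp only [Finset.prod_one_add, prod_monomial, Finset.prod_const_one]

theorem coeff_fromFun (f : ((Fin n ⊕ Unit) →₀ ℕ) → ℚ) (e : (Fin n ⊕ Unit) →₀ ℕ) :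
    coeff e (fromFun f) = f e := rfl

@[simp]
theorem dec_emb (α : Fin n →₀ ℕ) (i : ℕ) : dec (emb α i) = α := by
  ext j
  simp [dec, emb, Finsupp.mapDomain_apply Sum.inl_injective]

@[simp]
theorem tdeg_emb (α : Fin n →₀ ℕ) (i : ℕ) : tdeg (emb α i) = i := by
  simp [tdeg, emb, Finsupp.mapDomain_of_notMem_range]

theorem emb_dec_tdeg (e : (Fin n ⊕ Unit) →₀ ℕ) : emb (dec e) (tdeg e) = e := by
  ext (j | _) <;> simp [dec, tdeg, emb, Finsupp.mapDomain_apply Sum.inl_injective,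
    Finsupp.mapDomain_of_notMem_range]

theorem emb_eq_iff {α : Fin n →₀ ℕ} {i : ℕ} {e : (Fin n ⊕ Unit) →₀ ℕ} :
    emb α i = e ↔ α = dec e ∧ i = tdeg e := by
  constructor
  · rintro rfl
    simp
  · rintro ⟨rfl, rfl⟩
    exact emb_dec_tdeg e

theorem emb_add (α β : Fin n →₀ ℕ) (i j : ℕ) :
    emb (α + β) (i + j) = emb α i + emb β j := by
  simp only [emb, Finsupp.mapDomain_add, Finsupp.single_add]
  abel

theorem sum_emb_single (J : Finset (Fin n)) :
    ∑ j ∈ J, emb (Finsupp.single j 1) 1 = emb (chi J) J.card := by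
  induction J using Finset.cons_induction with
  | empty => simp [emb, chi]
  | cons a J ha ih =>
    rw [Finset.sum_cons, ih, ← emb_add, chi, chi, Finset.sum_cons, Finset.card_cons, add_comm 1]

theorem poincare_series_of_conjectureP
    (U : Type) (mdeg : U → Fin n →₀ ℕ) (hdeg : U → ℕ)
    (hfin : ∀ (α : Fin n →₀ ℕ) (i : ℕ), {u : U | mdeg u = α ∧ hdeg u = i}.Finite)
    -- `T i α = dim_k Tor_i^A(k,k)_α`
    (T : ℕ → (Fin n →₀ ℕ) → ℕ)
    -- Conjecture (P):
    (hT : ∀ i α, T i α = Nat.card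
      {p : Finset (Fin n) × U // p.1.card + hdeg p.2 = i ∧ chi p.1 + mdeg p.2 = α}) :
    -- the Poincaré–Betti series  Σ T i α x^α t^i …
    fromFun (fun e => (T (tdeg e) (dec e) : ℚ)) =
      -- … equals  Π (1 + x_i t) · Hilb_R(x,1,t)
      (∏ i : Fin n, (1 + MvPowerSeries.monomial (R := ℚ) (emb (Finsupp.single i 1) 1) 1)) *
        fromFun (fun e => (Nat.card {u : U // mdeg u = dec e ∧ hdeg u = tdeg e} : ℚ)) := by
  let deg u := emb (mdeg u) (hdeg u)
  have hfiber : ∀ e, {u | deg u = e}.Finite := fun e => by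
    simpa only [deg, emb_eq_iff] using hfin (dec e) (tdeg e)
  have hHilb : fromFun (fun e => (Nat.card {u : U // mdeg u = dec e ∧ hdeg u = tdeg e} : ℚ)) =
      cardSeries deg := by
    ext e
    simp only [deg, coeff_fromFun, coeff_cardSeries, emb_eq_iff]
  have hPB : fromFun (fun e => (T (tdeg e) (dec e) : ℚ)) =
      cardSeries fun p : Finset (Fin n) × U => emb (chi p.1) p.1.card + deg p.2 := by
    ext e
    simp only [deg, coeff_fromFun, coeff_cardSeries, ← emb_add, emb_eq_iff, hT, and_comm]
  rw [hPB, hHilb, prod_one_add_monomial, Finset.powerset_univ]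
  simp only [sum_emb_single]
  rw [sum_monomial_mul_cardSeries _ hfiber]
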